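/- Let X and Y be finitely supported random variables on G = 𝔽₂ⁿ, and let X₁, X₂, Y₁, Y₂ be mutually independent copies of X, X, Y, Y respectively. Set S = X₁ + X₂ + Y₁ + Y₂. Then s[X₁ + Y₂; X₂ + Y₁] + s[X₁ | X₁ + Y₂; Y₁ | Y₁ + X₂] = 2 s[X; Y] + I[(X₁ + Y₁, X₂ + Y₂) : (X₁ + Y₂, X₂ + Y₁) | S]. -/
import Mathlib


open Real Pointwise

noncomputable section

abbrev Fvec (n : ℕ) : Type := Fin n → ZMod 2

/-- Shannon entropy (natural log) of a finitely supported distribution. -/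
def ent {A : Type*} (p : A → ℝ) : ℝ := ∑ᶠ a, Real.negMulLog (p a)

/-- `p` is a (finitely supported) probability distribution. -/
def IsDist {A : Type*} (p : A → ℝ) : Prop := (∀ a, 0 ≤ p a) ∧ ∑ᶠ a, p a = 1

/-- Pushforward of a distribution along a map: the distribution of `f(X)` for `X ∼ p`. -/
def push {A B : Type*} (f : A → B) (p : A → ℝ) : B → ℝ := fun b => ∑ᶠ a ∈ f ⁻¹' {b}, p a

/-- Joint distribution of a pair of independent random variables. -/
def prodDist {A B : Type*} (p : A → ℝ) (q : B → ℝ) : A × B → ℝ := fun z => p z.1 * q z.2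

/-- Distribution of `X + Y` for independent `X ∼ p`, `Y ∼ q`. -/
def conv {A : Type*} [AddGroup A] (p q : A → ℝ) : A → ℝ := fun z => ∑ᶠ x, p x * q (z - x)

/-- The distribution of `X` conditioned on `U = b`, where `r` is the joint distribution of `(X, U)`. -/
def fiber {A B : Type*} (r : A × B → ℝ) (b : B) : A → ℝ := fun a => r (a, b) / push Prod.snd r b

/-- Conditional entropy `H[X | U]` of a joint distribution `r` of `(X, U)`. -/
def condEnt {A B : Type*} (r : A × B → ℝ) : ℝ := ∑ᶠ b, push Prod.snd r b * ent (fiber r b)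

/-- Doubling mass `s[X ; Y]` (of independent copies with distributions `p`, `q`). -/
def sDouble {A : Type*} [AddGroup A] (p q : A → ℝ) : ℝ := ent p + ent q - ent (conv p q)

/-- Conditional doubling mass `s[X | U ; Y | W] = 𝔼_{u ∼ U, w ∼ W} s[X_u ; Y_w]`,
where `r1`, `r2` are the joint distributions of `(X, U)` and `(Y, W)`. -/
def sCond {A U W : Type*} [AddGroup A] (r1 : A × U → ℝ) (r2 : A × W → ℝ) : ℝ :=
  ∑ᶠ u, ∑ᶠ w, push Prod.snd r1 u * push Prod.snd r2 w * sDouble (fiber r1 u) (fiber r2 w)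

/-- Conditional mutual information `I[A : B | S]` of a joint distribution of `(A, B, S)`. -/
def condMI {A B S : Type*} (r : A × B × S → ℝ) : ℝ :=
  ent (push (fun z => (z.1, z.2.2)) r) + ent (push (fun z => z.2) r)
    - ent r - ent (push (fun z => z.2.2) r)

/-- Uniform distribution on a set. -/
def unifOn {A : Type*} (s : Set A) : A → ℝ := s.indicator fun _ => (Nat.card s : ℝ)⁻¹

/-- Entropic Ruzsa distance `d[X ; Y]`. -/
def dRuzsa {A : Type*} [AddGroup A] (p q : A → ℝ) : ℝ := ent (conv p q) - ent p / 2 - ent q / 2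

/-- Joint distribution of `(X, X + Y)` for independent `X ∼ p`, `Y ∼ q`. -/
def jointSum {A : Type*} [AddGroup A] (p q : A → ℝ) : A × A → ℝ :=
  push (fun z : A × A => (z.1, z.1 + z.2)) (prodDist p q)

/-- Joint distribution of `(X, π_V(X))`. -/
def selfProj {n : ℕ} (V : Submodule (ZMod 2) (Fvec n)) (p : Fvec n → ℝ) :
    Fvec n × (Fvec n ⧸ V) → ℝ := push (fun x => (x, V.mkQ x)) p

/-- Joint distribution of independent `(X₁, X₂, Y₁, Y₂)` with `X₁, X₂ ∼ p` and `Y₁, Y₂ ∼ q`. -/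
def quad {A : Type*} (p q : A → ℝ) : A × A × A × A → ℝ :=
  fun z => p z.1 * p z.2.1 * q z.2.2.1 * q z.2.2.2

/-- Distribution of `X₁ + ⋯ + X_k` for independent `Xᵢ ∼ p i`. -/
def indepSum {A : Type*} [AddCommGroup A] (k : ℕ) (p : Fin k → A → ℝ) : A → ℝ :=
  push (fun x : Fin k → A => ∑ i, x i) (fun x => ∏ i, p i (x i))

/-- Statement `A(η, L, c)` from the paper. -/
def StA (η L c : ℝ) : Prop :=
  ∀ (n : ℕ) (p q : Fvec n → ℝ), IsDist p → IsDist q →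
    ent (conv p q) ≤ (1 - η) * (ent p + ent q) →
    ∃ V : Submodule (ZMod 2) (Fvec n),
      ent (unifOn (V : Set (Fvec n))) ≤ L * (ent p + ent q) ∧
      ent (push V.mkQ p) + ent (push V.mkQ q) ≤ (1 - c) * (ent p + ent q)

/-- Statement `B(η, ε, L)` from the paper. -/
def StB (η ε L : ℝ) : Prop :=
  ∀ (n : ℕ) (p q : Fvec n → ℝ), IsDist p → IsDist q →
    ∃ V : Submodule (ZMod 2) (Fvec n),
      ent (unifOn (V : Set (Fvec n))) ≤ L * (ent p + ent q) ∧
      ent (conv (push V.mkQ p) (push V.mkQ q)) ≥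
        (1 - η) * (ent (push V.mkQ p) + ent (push V.mkQ q)) - ε * (ent p + ent q)



/- ## Auxiliary lemmas -/

section Aux

variable {A B C U W : Type*}

lemma ent_eq [Fintype A] (p : A → ℝ) : ent p = ∑ a, Real.negMulLog (p a) :=
  finsum_eq_sum_of_fintype _

lemma push_apply [Fintype A] [DecidableEq B] (f : A → B) (p : A → ℝ) (b : B) :
    push f p b = ∑ a, if f a = b then p a else 0 := by
  classical
  rw [push, finsum_mem_def, finsum_eq_sum_of_fintype]
  refine Finset.sum_congr rfl fun a _ => ?_
  by_cases h : f a = b <;> simp [Set.indicator_apply, h]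

lemma sum_push [Fintype A] [Fintype B] (f : A → B) (p : A → ℝ) :
    ∑ b, push f p b = ∑ a, p a := by
  classical
  simp_rw [push_apply]
  rw [Finset.sum_comm]
  simp

lemma push_comp [Fintype A] [Fintype B] (f : A → B) (g : B → C) (p : A → ℝ) :
    push g (push f p) = push (g ∘ f) p := by
  classical
  funext c
  simp_rw [push_apply, Function.comp]
  have h1 : ∀ b : B, (if g b = c then (∑ a, if f a = b then p a else 0) else 0)
      = ∑ a, if f a = b then (if g b = c then p a else 0) else 0 := by
    intro b; split_ifs with h <;> simp [h]
  simp_rw [h1]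
  rw [Finset.sum_comm]
  refine Finset.sum_congr rfl fun a _ => ?_
  simp [Finset.sum_ite_eq]

lemma push_equiv [Fintype A] (e : A ≃ B) (p : A → ℝ) (b : B) :
    push (⇑e) p b = p (e.symm b) := by
  classical
  rw [push_apply]
  simp_rw [Equiv.apply_eq_iff_eq_symm_apply]
  simp

lemma push_symm_push [Fintype A] [Fintype B] (e : A ≃ B) (ν : A → ℝ) :
    push (⇑e.symm) (push (⇑e) ν) = ν := by
  funext a
  rw [push_equiv, push_equiv]
  simp

lemma push_nonneg [Fintype A] (f : A → B) (p : A → ℝ) (hp : ∀ a, 0 ≤ p a) (b : B) :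
    0 ≤ push f p b := by
  classical
  rw [push_apply]
  exact Finset.sum_nonneg fun a _ => by split <;> simp [hp a]

lemma push_apply_injective [Fintype A] (f : A → B) (hf : Function.Injective f) (p : A → ℝ)
    (a : A) : push f p (f a) = p a := by
  classical
  rw [push_apply, Finset.sum_eq_single a (fun a' _ h => by simp [hf.ne h]) (by simp)]
  simp

lemma ent_push_injective [Fintype A] [Fintype B] (f : A → B) (hf : Function.Injective f)
    (p : A → ℝ) : ent (push f p) = ent p := by
  classical
  rw [ent_eq, ent_eq]
  have hvan : ∀ b ∈ Finset.univ, b ∉ Finset.univ.image f →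
      Real.negMulLog (push f p b) = 0 := by
    intro b _ hb
    have hz : push f p b = 0 := by
      rw [push_apply]
      refine Finset.sum_eq_zero fun a _ => ?_
      have : f a ≠ b := fun h => hb (Finset.mem_image.2 ⟨a, Finset.mem_univ a, h⟩)
      simp [this]
    simp [hz, Real.negMulLog_zero]
  rw [← Finset.sum_subset (Finset.subset_univ (Finset.univ.image f)) hvan]
  rw [Finset.sum_image (fun a _ a' _ h => hf h)]
  exact Finset.sum_congr rfl fun a _ => by rw [push_apply_injective f hf]

lemma prodDist_map [Fintype A] [Fintype B] (f : A → C) (g : B → U)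
    (p : A → ℝ) (q : B → ℝ) :
    push (Prod.map f g) (prodDist p q) = prodDist (push f p) (push g q) := by
  classical
  funext z
  obtain ⟨b1, b2⟩ := z
  show push _ _ _ = push f p b1 * push g q b2
  simp_rw [push_apply, Fintype.sum_prod_type, Finset.sum_mul_sum]
  refine Finset.sum_congr rfl fun a1 _ => Finset.sum_congr rfl fun a2 _ => ?_
  show (if (f a1, g a2) = (b1, b2) then prodDist p q (a1, a2) else 0) = _
  simp only [Prod.mk.injEq, prodDist]
  split_ifs with h1 h2 h3 <;> simp_all

lemma sum_prodDist [Fintype A] [Fintype B] (p : A → ℝ) (q : B → ℝ) :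
    ∑ z, prodDist p q z = (∑ a, p a) * (∑ b, q b) := by
  rw [Fintype.sum_prod_type, Finset.sum_mul_sum]; rfl

lemma ent_prodDist [Fintype A] [Fintype B] (p : A → ℝ) (q : B → ℝ) :
    ent (prodDist p q) = (∑ b, q b) * ent p + (∑ a, p a) * ent q := by
  rw [ent_eq, ent_eq, ent_eq, Fintype.sum_prod_type]
  have h : ∀ a : A, ∑ b : B, Real.negMulLog (p a * q b)
      = (∑ b, q b) * Real.negMulLog (p a) + p a * ∑ b, Real.negMulLog (q b) := by
    intro a
    rw [Finset.mul_sum, Finset.sum_mul, ← Finset.sum_add_distrib]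
    refine Finset.sum_congr rfl fun b _ => ?_
    rw [Real.negMulLog_mul]
  simp_rw [prodDist]
  rw [Finset.sum_congr rfl fun a _ => h a, Finset.sum_add_distrib, ← Finset.sum_mul,
    ← Finset.mul_sum]

lemma conv_apply [Fintype A] [AddGroup A] (p q : A → ℝ) (z : A) :
    conv p q z = ∑ x, p x * q (z - x) :=
  finsum_eq_sum_of_fintype _

lemma conv_eq_push [Fintype A] [AddCommGroup A] (p q : A → ℝ) :
    conv p q = push (fun z : A × A => z.1 + z.2) (prodDist p q) := by
  classical
  funext z
  rw [conv_apply, push_apply, Fintype.sum_prod_type]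
  refine Finset.sum_congr rfl fun a _ => ?_
  have h : ∀ b : A, (a + b = z) ↔ (b = z - a) := fun b => (eq_sub_iff_add_eq').symm
  simp_rw [h]
  simp [prodDist]

lemma conv_comm [Fintype A] [AddCommGroup A] (p q : A → ℝ) : conv p q = conv q p := by
  funext z
  rw [conv_apply, conv_apply]
  refine Fintype.sum_equiv ⟨fun x => z - x, fun x => z - x, fun x => by simp, fun x => by simp⟩
    _ _ fun x => ?_
  simp [mul_comm]

lemma push_snd_apply [Fintype A] [Fintype B] (r : A × B → ℝ) (b : B) :
    push Prod.snd r b = ∑ a, r (a, b) := by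
  classical
  rw [push_apply, Fintype.sum_prod_type]
  refine Finset.sum_congr rfl fun a _ => ?_
  simp

lemma key_entropy [Fintype A] (w : ℝ) (g : A → ℝ) (hg : ∀ a, 0 ≤ g a) (hw : w = ∑ a, g a) :
    w * ∑ a, Real.negMulLog (g a / w) = (∑ a, Real.negMulLog (g a)) - Real.negMulLog w := by
  by_cases hw0 : w = 0
  · have hz : ∀ a, g a = 0 := by
      intro a
      have h0 : ∑ a, g a = 0 := by rw [← hw, hw0]
      exact (Finset.sum_eq_zero_iff_of_nonneg (fun a _ => hg a)).1 h0 a (Finset.mem_univ a)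
    simp [hw0, hz, Real.negMulLog_zero]
  · have hterm : ∀ a, w * Real.negMulLog (g a / w)
        = Real.negMulLog (g a) + g a * Real.log w := by
      intro a
      by_cases hga : g a = 0
      · simp [hga, Real.negMulLog_zero]
      · rw [Real.negMulLog, Real.negMulLog, Real.log_div hga hw0]
        field_simp
        ring
    rw [Finset.mul_sum]
    simp_rw [hterm]
    rw [Finset.sum_add_distrib, ← Finset.sum_mul, ← hw, Real.negMulLog]
    ring

lemma condEnt_eq [Fintype A] [Fintype B] (r : A × B → ℝ) (hr : ∀ z, 0 ≤ r z) :
    condEnt r = ent r - ent (push Prod.snd r) := by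
  classical
  rw [condEnt, finsum_eq_sum_of_fintype]
  have hterm : ∀ b, push Prod.snd r b * ent (fiber r b)
      = (∑ a, Real.negMulLog (r (a, b))) - Real.negMulLog (push Prod.snd r b) := by
    intro b
    rw [ent_eq]
    exact key_entropy _ _ (fun a => hr _) (push_snd_apply r b)
  simp_rw [hterm]
  rw [Finset.sum_sub_distrib, ent_eq (push Prod.snd r), ent_eq r, Fintype.sum_prod_type,
    Finset.sum_comm]

lemma pushPsi_apply [Fintype A] [Fintype U] [Fintype W] [AddCommGroup A]
    (r1 : A × U → ℝ) (r2 : A × W → ℝ) (a : A) (u : U) (w : W) :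
    push (fun z : (A × U) × (A × W) => (z.1.1 + z.2.1, (z.1.2, z.2.2))) (prodDist r1 r2)
      (a, (u, w)) = ∑ x, r1 (x, u) * r2 (a - x, w) := by
  classical
  rw [push_apply]
  have hcond : ∀ z : (A × U) × (A × W),
      (((z.1.1 + z.2.1, (z.1.2, z.2.2)) : A × U × W) = (a, (u, w)))
      ↔ (z.2.2 = w ∧ z.2.1 = a - z.1.1 ∧ z.1.2 = u) := by
    intro z
    constructor
    · intro h
      rw [Prod.ext_iff] at h
      obtain ⟨h1, h2⟩ := h
      rw [Prod.ext_iff] at h2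
      exact ⟨h2.2, eq_sub_iff_add_eq'.2 h1, h2.1⟩
    · rintro ⟨h1, h2, h3⟩
      refine Prod.ext ?_ (Prod.ext h3 h1)
      rw [h2]
      exact add_sub_cancel _ _
  simp_rw [hcond, ite_and]
  simp_rw [Fintype.sum_prod_type]
  simp [Finset.sum_ite_eq', prodDist]

lemma snd_pushPsi [Fintype A] [Fintype U] [Fintype W] [AddCommGroup A]
    (r1 : A × U → ℝ) (r2 : A × W → ℝ) :
    push Prod.snd
        (push (fun z : (A × U) × (A × W) => (z.1.1 + z.2.1, (z.1.2, z.2.2))) (prodDist r1 r2))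
      = prodDist (push Prod.snd r1) (push Prod.snd r2) := by
  rw [push_comp, ← prodDist_map]
  rfl

lemma fiber_pushPsi [Fintype A] [Fintype U] [Fintype W] [AddCommGroup A]
    (r1 : A × U → ℝ) (r2 : A × W → ℝ) (u : U) (w : W) :
    fiber (push (fun z : (A × U) × (A × W) => (z.1.1 + z.2.1, (z.1.2, z.2.2)))
        (prodDist r1 r2)) (u, w)
      = conv (fiber r1 u) (fiber r2 w) := by
  funext a
  show push _ (prodDist r1 r2) (a, (u, w)) / push Prod.snd _ (u, w) = _
  rw [pushPsi_apply, snd_pushPsi, conv_apply]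
  show _ / (push Prod.snd r1 u * push Prod.snd r2 w)
      = ∑ x, (r1 (x, u) / push Prod.snd r1 u) * (r2 (a - x, w) / push Prod.snd r2 w)
  rw [Finset.sum_div]
  exact Finset.sum_congr rfl fun x _ => (div_mul_div_comm _ _ _ _).symm

lemma sCond_eq [Fintype A] [Fintype U] [Fintype W] [AddCommGroup A]
    (r1 : A × U → ℝ) (r2 : A × W → ℝ)
    (s1 : ∑ z, r1 z = 1) (s2 : ∑ z, r2 z = 1) :
    sCond r1 r2 = condEnt r1 + condEnt r2
      - condEnt (push (fun z : (A × U) × (A × W) => (z.1.1 + z.2.1, (z.1.2, z.2.2)))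
          (prodDist r1 r2)) := by
  classical
  have hsum1 : ∑ u, push Prod.snd r1 u = 1 := by rw [sum_push]; exact s1
  have hsum2 : ∑ w, push Prod.snd r2 w = 1 := by rw [sum_push]; exact s2
  rw [sCond, condEnt, condEnt, condEnt, finsum_eq_sum_of_fintype, finsum_eq_sum_of_fintype,
    finsum_eq_sum_of_fintype, finsum_eq_sum_of_fintype]
  simp_rw [finsum_eq_sum_of_fintype]
  rw [Fintype.sum_prod_type]
  have hpt : ∀ (u : U) (w : W),
      push Prod.snd (push (fun z : (A × U) × (A × W) => (z.1.1 + z.2.1, (z.1.2, z.2.2)))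
          (prodDist r1 r2)) (u, w)
        * ent (fiber (push (fun z : (A × U) × (A × W) => (z.1.1 + z.2.1, (z.1.2, z.2.2)))
            (prodDist r1 r2)) (u, w))
      = push Prod.snd r1 u * push Prod.snd r2 w
          * ent (conv (fiber r1 u) (fiber r2 w)) := by
    intro u w
    rw [fiber_pushPsi, snd_pushPsi]
    rfl
  simp_rw [hpt, sDouble, mul_sub, mul_add, Finset.sum_sub_distrib, Finset.sum_add_distrib]
  have hA : ∑ u, ∑ w, push Prod.snd r1 u * push Prod.snd r2 w * ent (fiber r1 u)
      = ∑ u, push Prod.snd r1 u * ent (fiber r1 u) := by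
    refine Finset.sum_congr rfl fun u _ => ?_
    calc ∑ w, push Prod.snd r1 u * push Prod.snd r2 w * ent (fiber r1 u)
        = (push Prod.snd r1 u * ent (fiber r1 u)) * ∑ w, push Prod.snd r2 w := by
          rw [Finset.mul_sum]
          exact Finset.sum_congr rfl fun w _ => by ring
      _ = push Prod.snd r1 u * ent (fiber r1 u) := by rw [hsum2, mul_one]
  have hB : ∑ u, ∑ w, push Prod.snd r1 u * push Prod.snd r2 w * ent (fiber r2 w)
      = ∑ w, push Prod.snd r2 w * ent (fiber r2 w) := by
    calc ∑ u, ∑ w, push Prod.snd r1 u * push Prod.snd r2 w * ent (fiber r2 w)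
        = (∑ u, push Prod.snd r1 u) * ∑ w, push Prod.snd r2 w * ent (fiber r2 w) := by
          rw [Finset.sum_mul]
          refine Finset.sum_congr rfl fun u _ => ?_
          rw [Finset.mul_sum]
          exact Finset.sum_congr rfl fun w _ => by ring
      _ = ∑ w, push Prod.snd r2 w * ent (fiber r2 w) := by rw [hsum1, one_mul]
  rw [hA, hB]

/-- Pairing `((x₁,y₁),(x₂,y₂)) ↦ (x₁,x₂,y₁,y₂)`. -/
def sig1 {A B : Type*} : (A × B) × (A × B) ≃ A × A × B × B where
  toFun w := (w.1.1, (w.2.1, (w.1.2, w.2.2)))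
  invFun z := ((z.1, z.2.2.1), (z.2.1, z.2.2.2))
  left_inv _ := rfl
  right_inv _ := rfl

/-- Pairing `((x₁,y₂),(x₂,y₁)) ↦ (x₁,x₂,y₁,y₂)`. -/
def sig2 {A B : Type*} : (A × B) × (A × B) ≃ A × A × B × B where
  toFun w := (w.1.1, (w.2.1, (w.2.2, w.1.2)))
  invFun z := ((z.1, z.2.2.2), (z.2.1, z.2.2.1))
  left_inv _ := rfl
  right_inv _ := rfl

/-- Pairing `((x₁,y₂),(y₁,x₂)) ↦ (x₁,x₂,y₁,y₂)`. -/
def sig3 {A B : Type*} : (A × B) × (B × A) ≃ A × A × B × B where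
  toFun w := (w.1.1, (w.2.2, (w.2.1, w.1.2)))
  invFun z := ((z.1, z.2.2.2), (z.2.2.1, z.2.1))
  left_inv _ := rfl
  right_inv _ := rfl

lemma push_sig1 [Fintype A] (p : A → ℝ) (q : A → ℝ) :
    push (⇑(sig1 (A := A) (B := A))) (prodDist (prodDist p q) (prodDist p q)) = quad p q := by
  funext z
  rw [push_equiv]
  obtain ⟨x1, x2, y1, y2⟩ := z
  show (p x1 * q y1) * (p x2 * q y2) = _
  simp only [quad]
  ring

lemma push_sig2 [Fintype A] (p : A → ℝ) (q : A → ℝ) :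
    push (⇑(sig2 (A := A) (B := A))) (prodDist (prodDist p q) (prodDist p q)) = quad p q := by
  funext z
  rw [push_equiv]
  obtain ⟨x1, x2, y1, y2⟩ := z
  show (p x1 * q y2) * (p x2 * q y1) = _
  simp only [quad]
  ring

lemma push_sig3 [Fintype A] (p : A → ℝ) (q : A → ℝ) :
    push (⇑(sig3 (A := A) (B := A))) (prodDist (prodDist p q) (prodDist q p)) = quad p q := by
  funext z
  rw [push_equiv]
  obtain ⟨x1, x2, y1, y2⟩ := z
  show (p x1 * q y2) * (q y1 * p x2) = _
  simp only [quad]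
  ring

end Aux


/- ## Maps used in the proof of Statement 11 -/

/-- The triple `(X₁+Y₁, X₁+Y₂, Y₁+X₂)`. -/
def Phi (n : ℕ) : Fvec n × Fvec n × Fvec n × Fvec n → Fvec n × Fvec n × Fvec n :=
  fun z => (z.1 + z.2.2.1, (z.1 + z.2.2.2, z.2.2.1 + z.2.1))

/-- The map `((X₁+Y₁, X₂+Y₂), ((X₁+Y₂, X₂+Y₁), S))`. -/
def Gmap (n : ℕ) : Fvec n × Fvec n × Fvec n × Fvec n →
    (Fvec n × Fvec n) × (Fvec n × Fvec n) × Fvec n :=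
  fun z => ((z.1 + z.2.2.1, z.2.1 + z.2.2.2),
    ((z.1 + z.2.2.2, z.2.1 + z.2.2.1), z.1 + z.2.1 + z.2.2.1 + z.2.2.2))

def g1map (n : ℕ) : Fvec n × Fvec n × Fvec n × Fvec n → Fvec n × Fvec n :=
  fun z => (z.1 + z.2.2.1, z.2.1 + z.2.2.2)

def g2map (n : ℕ) : Fvec n × Fvec n × Fvec n × Fvec n → Fvec n × Fvec n :=
  fun z => (z.1 + z.2.2.2, z.2.1 + z.2.2.1)

def kmap (n : ℕ) : Fvec n × Fvec n → (Fvec n × Fvec n) × Fvec n := fun v => (v, v.1 + v.2)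

def hmap (n : ℕ) : Fvec n × Fvec n × Fvec n → (Fvec n × Fvec n) × (Fvec n × Fvec n) × Fvec n :=
  fun z => ((z.1, z.1 + z.2.1 + z.2.2), (z.2, z.2.1 + z.2.2))

lemma kmap_inj (n : ℕ) : Function.Injective (kmap n) := by
  have h : Function.LeftInverse (fun t : (Fvec n × Fvec n) × Fvec n => t.1) (kmap n) :=
    fun _ => rfl
  exact h.injective

lemma hmap_inj (n : ℕ) : Function.Injective (hmap n) := by
  have h : Function.LeftInverse
      (fun t : (Fvec n × Fvec n) × (Fvec n × Fvec n) × Fvec n => (t.1.1, t.2.1))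
      (hmap n) := fun _ => rfl
  exact h.injective

lemma zmod2_add : ∀ a b c d : ZMod 2, b + d = a + c + (a + d) + (c + b) := by decide

/-- With `X₁, X₂, Y₁, Y₂` mutually independent copies of `X, X, Y, Y` and
`S = X₁+X₂+Y₁+Y₂`:
`s[X₁+Y₂; X₂+Y₁] + s[X₁ | X₁+Y₂; Y₁ | Y₁+X₂] = 2s[X; Y] + I[(X₁+Y₁, X₂+Y₂) : (X₁+Y₂, X₂+Y₁) | S]`. -/
theorem statement11 (n : ℕ) (p q : Fvec n → ℝ) (hp : IsDist p) (hq : IsDist q) :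
    sDouble (conv p q) (conv p q) + sCond (jointSum p q) (jointSum q p) =
      2 * sDouble p q +
        condMI (push (fun z : Fvec n × Fvec n × Fvec n × Fvec n =>
          ((z.1 + z.2.2.1, z.2.1 + z.2.2.2),
            ((z.1 + z.2.2.2, z.2.1 + z.2.2.1), z.1 + z.2.1 + z.2.2.1 + z.2.2.2))) (quad p q)) := by
  classical
  have hps : ∑ a, p a = 1 := by rw [← finsum_eq_sum_of_fintype]; exact hp.2
  have hqs : ∑ a, q a = 1 := by rw [← finsum_eq_sum_of_fintype]; exact hq.2
  have hDs : ∑ z, prodDist p q z = 1 := by rw [sum_prodDist, hps, hqs, one_mul]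
  have hD's : ∑ z, prodDist q p z = 1 := by rw [sum_prodDist, hqs, hps, one_mul]
  have hentD : ent (prodDist p q) = ent p + ent q := by
    rw [ent_prodDist, hps, hqs, one_mul, one_mul]
  have hentD' : ent (prodDist q p) = ent q + ent p := by
    rw [ent_prodDist, hps, hqs, one_mul, one_mul]
  have hcs : ∑ a, conv p q a = 1 := by rw [conv_eq_push, sum_push]; exact hDs
  have hcomm : conv q p = conv p q := conv_comm q p
  have hJ : Function.Injective (fun z : Fvec n × Fvec n => (z.1, z.1 + z.2)) := by
    intro z z' h
    simp only [Prod.mk.injEq] at h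
    obtain ⟨h1, h2⟩ := h
    rw [h1] at h2
    exact Prod.ext h1 (add_left_cancel h2)
  have hentr1 : ent (jointSum p q) = ent p + ent q := by
    simp only [jointSum]
    rw [ent_push_injective _ hJ, hentD]
  have hentr2 : ent (jointSum q p) = ent q + ent p := by
    simp only [jointSum]
    rw [ent_push_injective _ hJ, hentD']
  have hw1 : push Prod.snd (jointSum p q) = conv p q := by
    simp only [jointSum]
    rw [push_comp]
    exact (conv_eq_push p q).symm
  have hw2 : push Prod.snd (jointSum q p) = conv p q := by
    simp only [jointSum]
    rw [push_comp]
    exact ((conv_eq_push q p).symm).trans hcomm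
  have hDnn : ∀ z, 0 ≤ prodDist p q z := fun z => mul_nonneg (hp.1 _) (hq.1 _)
  have hD'nn : ∀ z, 0 ≤ prodDist q p z := fun z => mul_nonneg (hq.1 _) (hp.1 _)
  have hr1nn : ∀ z, 0 ≤ jointSum p q z := by
    simp only [jointSum]; exact fun z => push_nonneg _ _ hDnn z
  have hr2nn : ∀ z, 0 ≤ jointSum q p z := by
    simp only [jointSum]; exact fun z => push_nonneg _ _ hD'nn z
  have hr1s : ∑ z, jointSum p q z = 1 := by
    simp only [jointSum]; rw [sum_push]; exact hDs
  have hr2s : ∑ z, jointSum q p z = 1 := by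
    simp only [jointSum]; rw [sum_push]; exact hD's
  have hRnn : ∀ z, 0 ≤ push (fun z : (Fvec n × Fvec n) × (Fvec n × Fvec n) =>
      (z.1.1 + z.2.1, (z.1.2, z.2.2))) (prodDist (jointSum p q) (jointSum q p)) z :=
    fun z => push_nonneg _ _ (fun w => mul_nonneg (hr1nn _) (hr2nn _)) z
  -- the entropy of the pushforward along Ψ equals the entropy of `push (Phi n) (quad p q)`
  have hentR : ent (push (fun z : (Fvec n × Fvec n) × (Fvec n × Fvec n) =>
        (z.1.1 + z.2.1, (z.1.2, z.2.2))) (prodDist (jointSum p q) (jointSum q p)))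
      = ent (push (Phi n) (quad p q)) := by
    simp only [jointSum]
    rw [← prodDist_map, push_comp]
    have hq3 : prodDist (prodDist p q) (prodDist q p)
        = push (⇑(sig3 (A := Fvec n) (B := Fvec n)).symm) (quad p q) := by
      rw [← push_sig3 p q, push_symm_push]
    rw [hq3, push_comp]
    rfl
  have hcondR : condEnt (push (fun z : (Fvec n × Fvec n) × (Fvec n × Fvec n) =>
        (z.1.1 + z.2.1, (z.1.2, z.2.2))) (prodDist (jointSum p q) (jointSum q p)))
      = ent (push (Phi n) (quad p q)) - 2 * ent (conv p q) := by
    rw [condEnt_eq _ hRnn, hentR, snd_pushPsi, hw1, hw2, ent_prodDist, hcs]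
    ring
  have E2 : sCond (jointSum p q) (jointSum q p)
      = (ent p + ent q - ent (conv p q)) + (ent q + ent p - ent (conv p q))
        - (ent (push (Phi n) (quad p q)) - 2 * ent (conv p q)) := by
    rw [sCond_eq _ _ hr1s hr2s, condEnt_eq _ hr1nn, condEnt_eq _ hr2nn, hcondR, hw1, hw2,
      hentr1, hentr2]
  -- identities for the conditional mutual information term
  have hG : Gmap n = hmap n ∘ Phi n := by
    funext z
    obtain ⟨x1, x2, y1, y2⟩ := z
    simp only [Gmap, hmap, Phi, Function.comp_apply, Prod.mk.injEq]
    refine ⟨⟨trivial, ?_⟩, ⟨trivial, ?_⟩, ?_⟩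
    · funext i
      exact zmod2_add (x1 i) (x2 i) (y1 i) (y2 i)
    · exact add_comm x2 y1
    · abel
  have hfg1 : (fun z : (Fvec n × Fvec n) × (Fvec n × Fvec n) × Fvec n => (z.1, z.2.2))
      ∘ Gmap n = kmap n ∘ g1map n := by
    funext z
    obtain ⟨x1, x2, y1, y2⟩ := z
    simp only [Gmap, kmap, g1map, Function.comp_apply, Prod.mk.injEq]
    exact ⟨trivial, by abel⟩
  have hfg2 : (fun z : (Fvec n × Fvec n) × (Fvec n × Fvec n) × Fvec n => z.2)
      ∘ Gmap n = kmap n ∘ g2map n := by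
    funext z
    obtain ⟨x1, x2, y1, y2⟩ := z
    simp only [Gmap, kmap, g2map, Function.comp_apply, Prod.mk.injEq]
    exact ⟨trivial, by abel⟩
  have hfg3 : (fun z : (Fvec n × Fvec n) × (Fvec n × Fvec n) × Fvec n => z.2.2)
      ∘ Gmap n = (fun v : Fvec n × Fvec n => v.1 + v.2) ∘ g1map n := by
    funext z
    obtain ⟨x1, x2, y1, y2⟩ := z
    simp only [Gmap, g1map, Function.comp_apply]
    abel
  have hg1quad : push (g1map n) (quad p q) = prodDist (conv p q) (conv p q) := by
    have h1 : quad p q = push (⇑(sig1 (A := Fvec n) (B := Fvec n)))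
        (prodDist (prodDist p q) (prodDist p q)) := (push_sig1 p q).symm
    rw [h1, push_comp]
    have h2 : g1map n ∘ ⇑(sig1 (A := Fvec n) (B := Fvec n))
        = Prod.map (fun v : Fvec n × Fvec n => v.1 + v.2)
            (fun v : Fvec n × Fvec n => v.1 + v.2) := rfl
    rw [h2, prodDist_map, ← conv_eq_push]
  have hg2quad : push (g2map n) (quad p q) = prodDist (conv p q) (conv p q) := by
    have h1 : quad p q = push (⇑(sig2 (A := Fvec n) (B := Fvec n)))
        (prodDist (prodDist p q) (prodDist p q)) := (push_sig2 p q).symm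
    rw [h1, push_comp]
    have h2 : g2map n ∘ ⇑(sig2 (A := Fvec n) (B := Fvec n))
        = Prod.map (fun v : Fvec n × Fvec n => v.1 + v.2)
            (fun v : Fvec n × Fvec n => v.1 + v.2) := rfl
    rw [h2, prodDist_map, ← conv_eq_push]
  have hm1 : ent (push (fun z : (Fvec n × Fvec n) × (Fvec n × Fvec n) × Fvec n =>
        (z.1, z.2.2)) (push (Gmap n) (quad p q))) = 2 * ent (conv p q) := by
    rw [push_comp, hfg1, ← push_comp, ent_push_injective _ (kmap_inj n), hg1quad,
      ent_prodDist, hcs]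
    ring
  have hm2 : ent (push (fun z : (Fvec n × Fvec n) × (Fvec n × Fvec n) × Fvec n =>
        z.2) (push (Gmap n) (quad p q))) = 2 * ent (conv p q) := by
    rw [push_comp, hfg2, ← push_comp, ent_push_injective _ (kmap_inj n), hg2quad,
      ent_prodDist, hcs]
    ring
  have hm3 : ent (push (fun z : (Fvec n × Fvec n) × (Fvec n × Fvec n) × Fvec n =>
        z.2.2) (push (Gmap n) (quad p q))) = ent (conv (conv p q) (conv p q)) := by
    rw [push_comp, hfg3, ← push_comp, hg1quad, ← conv_eq_push]
  have hTent : ent (push (Gmap n) (quad p q)) = ent (push (Phi n) (quad p q)) := by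
    rw [hG, ← push_comp, ent_push_injective _ (hmap_inj n)]
  have E4 : condMI (push (Gmap n) (quad p q))
      = 2 * ent (conv p q) + 2 * ent (conv p q)
        - ent (push (Phi n) (quad p q)) - ent (conv (conv p q) (conv p q)) := by
    simp only [condMI]
    rw [hm1, hm2, hTent, hm3]
  show sDouble (conv p q) (conv p q) + sCond (jointSum p q) (jointSum q p)
      = 2 * sDouble p q + condMI (push (Gmap n) (quad p q))
  rw [E2, E4]
  simp only [sDouble]
  ring
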